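/- arXiv:0705.3342 — 2 statements merged into one kernel-verified Lean document; each statement's English description precedes it below -/
import Mathlib

section
/- In P-probability, n^{-3/4} · sup_{y ∈ ℤ} N_n(y) converges to 0 as n → ∞; that is, for every ε > 0, P( sup_{y ∈ ℤ} N_n(y) > ε n^{3/4} ) → 0. -/
/-!
Third-moment method. Let `T_n` be the number of triples `j ≤ k ≤ l ≤ n` with `Y_j = Y_k = Y_l`.
Sorting the ordered triples of visits to `y` gives `N_n(y)^3 ≤ 3! T_n` for every `y`. By
independence of increments `P(Y_j = Y_k = Y_l) = P(Y_{k-j} = 0) P(Y_{l-k} = 0)`, and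
`P(Y_m = 0) ≤ binom(m, m/2) 2^{-m} ≤ (m+1)^{-1/2}`, so
`E T_n ≤ (n+1) (∑_{d ≤ n} (d+1)^{-1/2})^2 ≤ 4 (n+1)^2`. Markov's inequality applied to `T_n` at
level `ε^3 n^{9/4} / 6` then bounds `P(sup_y N_n(y) > ε n^{3/4})` by `O(n^{-1/4})`.
-/

open MeasureTheory ProbabilityTheory Filter

noncomputable section

/-- The simple random walk `Y_n = η_1 + ⋯ + η_n`, with `Y_0 = 0`. -/
def walk {Ω : Type*} (η : ℕ → Ω → ℤ) (n : ℕ) (ω : Ω) : ℤ :=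
  ∑ k ∈ Finset.range n, η (k + 1) ω

/-- The local time `N_n(y) = #{0 ≤ k ≤ n : Y_k = y}` of the walk. -/
def localTime {Ω : Type*} (η : ℕ → Ω → ℤ) (n : ℕ) (y : ℤ) (ω : Ω) : ℕ :=
  ((Finset.range (n + 1)).filter fun k => walk η k ω = y).card

open Finset
open scoped ENNReal Nat

theorem Nat.three_mul_add_one_mul_centralBinom_sq_le (n : ℕ) :
    (3 * n + 1) * n.centralBinom ^ 2 ≤ 16 ^ n := by
  induction n with
  | zero => simp
  | succ n ih =>
    have hpoly : 4 * (2 * n + 1) ^ 2 * (3 * n + 4) ≤ 16 * ((n + 1) ^ 2 * (3 * n + 1)) := by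
      nlinarith
    refine Nat.le_of_mul_le_mul_left ?_ (by positivity : 0 < (n + 1) ^ 2 * (3 * n + 1))
    calc (n + 1) ^ 2 * (3 * n + 1) * ((3 * (n + 1) + 1) * (n + 1).centralBinom ^ 2)
        = (3 * n + 4) * (3 * n + 1) * ((n + 1) * (n + 1).centralBinom) ^ 2 := by ring
      _ = 4 * (2 * n + 1) ^ 2 * (3 * n + 4) * ((3 * n + 1) * n.centralBinom ^ 2) := by
        rw [Nat.succ_mul_centralBinom_succ]; ring
      _ ≤ 16 * ((n + 1) ^ 2 * (3 * n + 1)) * 16 ^ n := Nat.mul_le_mul hpoly ih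
      _ = (n + 1) ^ 2 * (3 * n + 1) * 16 ^ (n + 1) := by ring

def pathCount : ℕ → ℤ → ℕ
  | 0, t => if t = 0 then 1 else 0
  | m + 1, t => pathCount m (t - 1) + pathCount m (t + 1)

theorem pathCount_eq_zero_of_lt_neg {m : ℕ} {t : ℤ} (ht : t < -m) : pathCount m t = 0 := by
  induction m generalizing t with
  | zero => simp [pathCount]; omega
  | succ m ih => rw [pathCount, ih (by omega), ih (by omega)]

theorem pathCount_eq_zero_of_odd {m : ℕ} {t : ℤ} (ht : Odd (m + t)) : pathCount m t = 0 := by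
  induction m generalizing t with
  | zero => simp only [pathCount, ite_eq_right_iff]; rintro rfl; simp at ht
  | succ m ih =>
    obtain ⟨k, hk⟩ := ht
    push_cast at hk
    rw [pathCount, ih ⟨k - 1, by omega⟩, ih ⟨k, by omega⟩]

theorem pathCount_two_mul_sub (m j : ℕ) : pathCount m (2 * j - m) = m.choose j := by
  induction m generalizing j with
  | zero => rcases j with _ | j <;> simp [pathCount]; omega
  | succ m ih =>
    rw [pathCount]
    rcases j with _ | j
    · rw [pathCount_eq_zero_of_lt_neg (by omega), show (2 * ((0 : ℕ) : ℤ) - (m + 1 : ℕ)) + 1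
        = 2 * (0 : ℕ) - m by push_cast; ring, ih]
      simp
    · rw [show (2 * ((j + 1 : ℕ) : ℤ) - (m + 1 : ℕ)) - 1 = 2 * j - m by push_cast; ring,
        show (2 * ((j + 1 : ℕ) : ℤ) - (m + 1 : ℕ)) + 1 = 2 * (j + 1 : ℕ) - m by push_cast; ring,
        ih, ih, Nat.choose_succ_succ]

theorem pathCount_zero_sq_mul_le (m : ℕ) : pathCount m 0 ^ 2 * (m + 1) ≤ 4 ^ m := by
  rcases Nat.even_or_odd m with ⟨u, rfl⟩ | hodd
  · have hcentral : pathCount (u + u) 0 = u.centralBinom := by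
      rw [Nat.centralBinom, two_mul, ← pathCount_two_mul_sub]; push_cast; ring_nf
    calc pathCount (u + u) 0 ^ 2 * (u + u + 1) ≤ (3 * u + 1) * u.centralBinom ^ 2 := by
          rw [hcentral, mul_comm]; gcongr; omega
      _ ≤ 16 ^ u := Nat.three_mul_add_one_mul_centralBinom_sq_le u
      _ = 4 ^ (u + u) := by rw [← two_mul, pow_mul]; norm_num
  · simp [pathCount_eq_zero_of_odd (t := 0) (by simpa using hodd)]

theorem pathCount_zero_mul_inv_two_pow_le (m : ℕ) :
    (pathCount m 0 : ℝ≥0∞) * 2⁻¹ ^ m ≤ ENNReal.ofReal (√(m + 1))⁻¹ := by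
  have hsqrt : (pathCount m 0 : ℝ) * √(m + 1) ≤ 2 ^ m := by
    have h : (pathCount m 0 : ℝ) ^ 2 * (m + 1) ≤ (2 ^ m) ^ 2 := by
      rw [← pow_mul, mul_comm m 2, pow_mul]
      exact_mod_cast pathCount_zero_sq_mul_le m
    calc (pathCount m 0 : ℝ) * √(m + 1) = √((pathCount m 0 : ℝ) ^ 2 * (m + 1)) := by
          rw [Real.sqrt_mul (by positivity), Real.sqrt_sq (by positivity)]
      _ ≤ √((2 ^ m) ^ 2) := Real.sqrt_le_sqrt h
      _ = 2 ^ m := Real.sqrt_sq (by positivity)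
  have hreal : (pathCount m 0 : ℝ) / 2 ^ m ≤ (√(m + 1))⁻¹ := by
    rwa [div_le_iff₀ (by positivity), le_inv_mul_iff₀ (by positivity), mul_comm]
  calc (pathCount m 0 : ℝ≥0∞) * 2⁻¹ ^ m = ENNReal.ofReal ((pathCount m 0 : ℝ) / 2 ^ m) := by
        rw [div_eq_mul_inv, ← inv_pow, ENNReal.ofReal_mul (by positivity), ENNReal.ofReal_natCast,
          ENNReal.ofReal_pow (by norm_num), ENNReal.ofReal_inv_of_pos two_pos,
          ENNReal.ofReal_ofNat]
    _ ≤ _ := ENNReal.ofReal_le_ofReal hreal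

structure IsRademacherFamily {Ω ι : Type*} [MeasurableSpace Ω] (η : ι → Ω → ℤ)
    (μ : Measure Ω) : Prop where
  measurable : ∀ i, Measurable (η i)
  indep : iIndepFun η μ
  measure_eq_one : ∀ i, μ {ω | η i ω = 1} = 1 / 2
  measure_eq_neg_one : ∀ i, μ {ω | η i ω = -1} = 1 / 2

section Rademacher

variable {Ω : Type*} [MeasurableSpace Ω] {μ : Measure Ω}

theorem ProbabilityTheory.iIndepFun.indepFun_finsetSum_finsetSum {ι β : Type*}
    [AddCommMonoid β] [MeasurableSpace β] [MeasurableAdd₂ β] {f : ι → Ω → β}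
    (hf : iIndepFun f μ) (hf_meas : ∀ i, Measurable (f i)) {S T : Finset ι}
    (hST : Disjoint S T) :
    IndepFun (fun ω => ∑ i ∈ S, f i ω) (fun ω => ∑ i ∈ T, f i ω) μ := by
  have hsum : ∀ U : Finset ι, Measurable fun v : U → β => ∑ i, v i :=
    fun U => Finset.measurable_sum _ fun i _ => measurable_pi_apply i
  convert (hf.indepFun_finset S T hST hf_meas).comp (hsum S) (hsum T) using 1 <;>
    ext ω <;> exact (Finset.sum_coe_sort _ (f · ω)).symm

variable [IsProbabilityMeasure μ]

theorem ae_eq_one_or_eq_neg_one {X : Ω → ℤ} (hX : Measurable X)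
    (h_one : μ {ω | X ω = 1} = 1 / 2) (h_negone : μ {ω | X ω = -1} = 1 / 2) :
    ∀ᵐ ω ∂μ, X ω = 1 ∨ X ω = -1 := by
  have hdisj : Disjoint {ω | X ω = 1} {ω | X ω = -1} :=
    Set.disjoint_left.2 fun ω h1 h2 => by simp_all
  have hunion : μ ({ω | X ω = 1} ∪ {ω | X ω = -1}) = 1 := by
    rw [measure_union hdisj (hX (measurableSet_singleton _)), h_one, h_negone,
      ENNReal.add_halves]
  exact (prob_compl_eq_zero_iff ((hX (measurableSet_singleton _)).union
    (hX (measurableSet_singleton _)))).2 hunion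

theorem measure_add_eq_of_indepFun {S X : Ω → ℤ} (hS : Measurable S) (hX : Measurable X)
    (hind : IndepFun S X μ)
    (h_one : μ {ω | X ω = 1} = 1 / 2) (h_negone : μ {ω | X ω = -1} = 1 / 2) (t : ℤ) :
    μ {ω | S ω + X ω = t} = μ {ω | S ω = t - 1} * 2⁻¹ + μ {ω | S ω = t + 1} * 2⁻¹ := by
  have hsplit : {ω | S ω + X ω = t} =ᵐ[μ]
      (S ⁻¹' {t - 1} ∩ X ⁻¹' {1} ∪ S ⁻¹' {t + 1} ∩ X ⁻¹' {-1} : Set Ω) := by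
    filter_upwards [ae_eq_one_or_eq_neg_one hX h_one h_negone] with ω hω
    change (S ω + X ω = t) = (S ω = t - 1 ∧ X ω = 1 ∨ S ω = t + 1 ∧ X ω = -1)
    exact propext (by omega)
  have hdisj : Disjoint (S ⁻¹' {t - 1} ∩ X ⁻¹' {1}) (S ⁻¹' {t + 1} ∩ X ⁻¹' {-1}) :=
    Set.disjoint_left.2 fun ω h1 h2 => by simp_all
  have hmeas := measurableSet_singleton (α := ℤ)
  rw [measure_congr hsplit, measure_union hdisj ((hS (hmeas _)).inter (hX (hmeas _))),
    hind.measure_inter_preimage_eq_mul _ _ (hmeas _) (hmeas _),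
    hind.measure_inter_preimage_eq_mul _ _ (hmeas _) (hmeas _)]
  simp only [Set.preimage, Set.mem_singleton_iff, h_one, h_negone, one_div]

namespace IsRademacherFamily

variable {ι : Type*} {η : ι → Ω → ℤ}

theorem measure_sum_eq (hη : IsRademacherFamily η μ) (s : Finset ι) (t : ℤ) :
    μ {ω | ∑ i ∈ s, η i ω = t} = pathCount #s t * 2⁻¹ ^ #s := by
  classical
  induction s using Finset.induction_on generalizing t with
  | empty => by_cases ht : t = 0 <;> simp [pathCount, ht, eq_comm]
  | insert a s ha ih =>
    have hind : IndepFun (fun ω => ∑ i ∈ s, η i ω) (η a) μ := by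
      simpa [Finset.sum_fn] using hη.indep.indepFun_finsetSum_of_notMem hη.measurable ha
    simp only [Finset.sum_insert ha, add_comm (η a _)]
    rw [measure_add_eq_of_indepFun (Finset.measurable_sum _ fun i _ => hη.measurable i)
      (hη.measurable a) hind (hη.measure_eq_one a) (hη.measure_eq_neg_one a), ih, ih,
      card_insert_of_notMem ha, pathCount]
    push_cast
    ring

theorem measure_sum_eq_zero_le (hη : IsRademacherFamily η μ) (s : Finset ι) :
    μ {ω | ∑ i ∈ s, η i ω = 0} ≤ ENNReal.ofReal (√(#s + 1))⁻¹ :=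
  (hη.measure_sum_eq s 0).trans_le (pathCount_zero_mul_inv_two_pow_le _)

end IsRademacherFamily

end Rademacher

section Walk

variable {Ω : Type*} {η : ℕ → Ω → ℤ}

theorem walk_sub_walk {j k : ℕ} (hjk : j ≤ k) (ω : Ω) :
    walk η k ω - walk η j ω = ∑ i ∈ Ico (j + 1) (k + 1), η i ω := by
  rw [walk, walk, ← sum_Ico_eq_sub _ hjk, ← map_add_right_Ico, sum_map]
  rfl

variable [MeasurableSpace Ω] {μ : Measure Ω} [IsProbabilityMeasure μ]

theorem measurable_walk (hη : ∀ i, Measurable (η i)) (n : ℕ) : Measurable (walk η n) :=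
  Finset.measurable_sum _ fun i _ => hη (i + 1)

theorem measure_walk_eq_walk_eq_walk_le (hη : IsRademacherFamily η μ) {j k l : ℕ} (hjk : j ≤ k)
    (hkl : k ≤ l) :
    μ {ω | walk η j ω = walk η k ω ∧ walk η k ω = walk η l ω}
      ≤ ENNReal.ofReal (√((k - j : ℕ) + 1))⁻¹ * ENNReal.ofReal (√((l - k : ℕ) + 1))⁻¹ := by
  have hevent : {ω | walk η j ω = walk η k ω ∧ walk η k ω = walk η l ω}
      = (fun ω => ∑ i ∈ Ico (j + 1) (k + 1), η i ω) ⁻¹' {0}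
        ∩ (fun ω => ∑ i ∈ Ico (k + 1) (l + 1), η i ω) ⁻¹' {0} := by
    ext ω
    simp only [Set.mem_ofPred_eq, Set.mem_inter_iff, Set.mem_preimage, Set.mem_singleton_iff,
      ← walk_sub_walk hjk, ← walk_sub_walk hkl]
    omega
  rw [hevent, (hη.indep.indepFun_finsetSum_finsetSum hη.measurable
    (Ico_disjoint_Ico_consecutive _ _ _)).measure_inter_preimage_eq_mul _ _
      (measurableSet_singleton _) (measurableSet_singleton _)]
  gcongr
  · exact (hη.measure_sum_eq_zero_le _).trans_eq (by simp)
  · exact (hη.measure_sum_eq_zero_le _).trans_eq (by simp)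

end Walk

theorem Finset.card_piFinset_const_le_factorial_mul {α : Type*} [LinearOrder α] (A : Finset α)
    (m : ℕ) : #(Fintype.piFinset fun _ : Fin m => A)
      ≤ m ! * #{f ∈ Fintype.piFinset (fun _ : Fin m => A) | Monotone f} := by
  classical
  refine card_le_mul_card_image_of_maps_to (f := fun f => f ∘ Tuple.sort f) ?_ m ! ?_
  · intro f hf
    simp only [mem_filter, Fintype.mem_piFinset] at hf ⊢
    exact ⟨fun i => hf _, Tuple.monotone_sort f⟩
  · intro g _
    calc #{f ∈ Fintype.piFinset (fun _ : Fin m => A) | f ∘ Tuple.sort f = g}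
        ≤ #((univ : Finset (Equiv.Perm (Fin m))).image fun σ : Equiv.Perm (Fin m) => g ∘ ⇑σ) := by
          refine card_le_card fun f hf => ?_
          rw [mem_filter] at hf
          refine mem_image.2 ⟨(Tuple.sort f)⁻¹, mem_univ _, ?_⟩
          rw [← hf.2]
          ext i
          simp
      _ ≤ m ! := by
          refine card_image_le.trans ?_
          simp [Fintype.card_perm]

def monotoneTriples (n : ℕ) : Finset (Fin 3 → ℕ) :=
  {f ∈ Fintype.piFinset fun _ => range (n + 1) | Monotone f}

theorem mem_monotoneTriples {n : ℕ} {f : Fin 3 → ℕ} :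
    f ∈ monotoneTriples n ↔ f 0 ≤ f 1 ∧ f 1 ≤ f 2 ∧ f 2 ≤ n := by
  simp only [monotoneTriples, mem_filter, Fintype.mem_piFinset, mem_range, Nat.lt_succ_iff,
    Fin.monotone_iff_le_succ, Fin.forall_fin_succ, IsEmpty.forall_iff, Fin.succ_zero_eq_one,
    Fin.succ_one_eq_two, Fin.castSucc_zero, Fin.castSucc_one, and_true]
  omega

theorem sum_monotoneTriples_le (F : ℕ → ℝ≥0∞) (n : ℕ) :
    ∑ f ∈ monotoneTriples n, F (f 1 - f 0) * F (f 2 - f 1)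
      ≤ (n + 1) * (∑ d ∈ range (n + 1), F d) ^ 2 := by
  let increments : (Fin 3 → ℕ) → (Fin 3 → ℕ) := fun f => ![f 0, f 1 - f 0, f 2 - f 1]
  have hinj : Set.InjOn increments (monotoneTriples n) := by
    intro f hf g hg hfg
    rw [mem_coe, mem_monotoneTriples] at hf hg
    have h0 := congrFun hfg 0
    have h1 := congrFun hfg 1
    have h2 := congrFun hfg 2
    simp only [increments, Matrix.cons_val_zero, Matrix.cons_val_one, Matrix.cons_val]
      at h0 h1 h2
    ext i
    fin_cases i <;> simp only [Fin.zero_eta, Fin.mk_one, Fin.reduceFinMk] <;> omega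
  have hmaps : ∀ f ∈ monotoneTriples n,
      increments f ∈ Fintype.piFinset fun _ => range (n + 1) := by
    intro f hf
    rw [mem_monotoneTriples] at hf
    simp only [Fintype.mem_piFinset, mem_range]
    intro i
    fin_cases i <;>
      simp only [increments, Fin.zero_eta, Fin.mk_one, Fin.reduceFinMk, Matrix.cons_val_zero,
        Matrix.cons_val_one, Matrix.cons_val, Order.lt_add_one_iff, tsub_le_iff_right] <;> omega
  calc ∑ f ∈ monotoneTriples n, F (f 1 - f 0) * F (f 2 - f 1)
      = ∑ q ∈ (monotoneTriples n).image increments, F (q 1) * F (q 2) := by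
        rw [sum_image hinj]; rfl
    _ ≤ ∑ q ∈ Fintype.piFinset (fun _ : Fin 3 => range (n + 1)), F (q 1) * F (q 2) :=
        sum_le_sum_of_subset (image_subset_iff.2 hmaps)
    _ = ∏ i : Fin 3, ∑ d ∈ range (n + 1), ![fun _ => 1, F, F] i d := by
        rw [prod_univ_sum]
        simp [Fin.prod_univ_three]
    _ = (n + 1) * (∑ d ∈ range (n + 1), F d) ^ 2 := by
        simp [Fin.prod_univ_three, sq, mul_assoc]

theorem Real.sum_range_inv_sqrt_succ_le (N : ℕ) : ∑ d ∈ range N, (√(d + 1))⁻¹ ≤ 2 * √N := by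
  induction N with
  | zero => simp
  | succ N ih =>
    have hpos : 0 < √((N : ℝ) + 1) := Real.sqrt_pos.2 (by positivity)
    have hstep : (√((N : ℝ) + 1))⁻¹ ≤ 2 * √((N : ℝ) + 1) - 2 * √N := by
      rw [inv_eq_one_div, div_le_iff₀ hpos]
      nlinarith [Real.sq_sqrt (Nat.cast_nonneg (α := ℝ) N),
        Real.sq_sqrt (by positivity : (0 : ℝ) ≤ N + 1)]
    rw [sum_range_succ, Nat.cast_succ]
    linarith

section Coincidences

variable {Ω : Type*} (η : ℕ → Ω → ℤ)

def walkCoincidence (f : Fin 3 → ℕ) : Set Ω :=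
  {ω | walk η (f 0) ω = walk η (f 1) ω ∧ walk η (f 1) ω = walk η (f 2) ω}

def walkCoincidences (n : ℕ) (ω : Ω) : Finset (Fin 3 → ℕ) :=
  {f ∈ monotoneTriples n | walk η (f 0) ω = walk η (f 1) ω ∧ walk η (f 1) ω = walk η (f 2) ω}

theorem localTime_pow_three_le (n : ℕ) (y : ℤ) (ω : Ω) :
    localTime η n y ω ^ 3 ≤ 6 * #(walkCoincidences η n ω) := by
  set A := (range (n + 1)).filter fun k => walk η k ω = y
  calc localTime η n y ω ^ 3 = #(Fintype.piFinset fun _ : Fin 3 => A) := by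
        simp [localTime, A]
    _ ≤ 3 ! * #{f ∈ Fintype.piFinset (fun _ : Fin 3 => A) | Monotone f} :=
        card_piFinset_const_le_factorial_mul A 3
    _ ≤ 6 * #(walkCoincidences η n ω) := by
        refine Nat.mul_le_mul_left _ (card_le_card fun f hf => ?_)
        simp only [mem_filter, Fintype.mem_piFinset, A] at hf
        simp only [walkCoincidences, monotoneTriples, mem_filter, Fintype.mem_piFinset]
        exact ⟨⟨fun i => (hf.1 i).1, hf.2⟩, by rw [(hf.1 0).2, (hf.1 1).2, (hf.1 2).2]; simp⟩

theorem natCast_card_walkCoincidences (n : ℕ) (ω : Ω) :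
    (#(walkCoincidences η n ω) : ℝ≥0∞)
      = ∑ f ∈ monotoneTriples n, (walkCoincidence η f).indicator 1 ω := by
  simp only [walkCoincidences, natCast_card_filter, Set.indicator_apply, walkCoincidence,
    Set.mem_ofPred_eq, Pi.one_apply]

end Coincidences

section Moment

variable {Ω : Type*} [MeasurableSpace Ω] {μ : Measure Ω} [IsProbabilityMeasure μ]
  {η : ℕ → Ω → ℤ}

theorem measurableSet_walkCoincidence (hη : ∀ i, Measurable (η i)) (f : Fin 3 → ℕ) :
    MeasurableSet (walkCoincidence η f) :=
  (measurableSet_eq_fun (measurable_walk hη _) (measurable_walk hη _)).inter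
    (measurableSet_eq_fun (measurable_walk hη _) (measurable_walk hη _))

theorem measurable_card_walkCoincidences (hη : ∀ i, Measurable (η i)) (n : ℕ) :
    Measurable fun ω => (#(walkCoincidences η n ω) : ℝ≥0∞) := by
  simp_rw [natCast_card_walkCoincidences]
  exact Finset.measurable_sum _ fun f _ =>
    measurable_one.indicator (measurableSet_walkCoincidence hη f)

theorem lintegral_card_walkCoincidences_le (hη : IsRademacherFamily η μ) (n : ℕ) :
    ∫⁻ ω, #(walkCoincidences η n ω) ∂μ ≤ ENNReal.ofReal (4 * (n + 1) ^ 2) := by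
  let F : ℕ → ℝ≥0∞ := fun d => ENNReal.ofReal (√(d + 1))⁻¹
  have hsum : ∑ d ∈ range (n + 1), F d ≤ ENNReal.ofReal (2 * √(n + 1)) := by
    rw [← ENNReal.ofReal_sum_of_nonneg fun d _ => by positivity]
    exact ENNReal.ofReal_le_ofReal (by exact_mod_cast Real.sum_range_inv_sqrt_succ_le (n + 1))
  calc ∫⁻ ω, #(walkCoincidences η n ω) ∂μ
      = ∑ f ∈ monotoneTriples n, μ (walkCoincidence η f) := by
        simp_rw [natCast_card_walkCoincidences]
        rw [lintegral_finsetSum _ fun f _ =>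
          measurable_one.indicator (measurableSet_walkCoincidence hη.measurable f)]
        simp [lintegral_indicator_one (measurableSet_walkCoincidence hη.measurable _)]
    _ ≤ ∑ f ∈ monotoneTriples n, F (f 1 - f 0) * F (f 2 - f 1) := by
        refine sum_le_sum fun f hf => ?_
        rw [mem_monotoneTriples] at hf
        exact measure_walk_eq_walk_eq_walk_le hη hf.1 hf.2.1
    _ ≤ (n + 1) * (∑ d ∈ range (n + 1), F d) ^ 2 := sum_monotoneTriples_le F n
    _ ≤ (n + 1) * ENNReal.ofReal (2 * √(n + 1)) ^ 2 := by gcongr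
    _ = ENNReal.ofReal (4 * (n + 1) ^ 2) := by
        rw [← ENNReal.ofReal_pow (by positivity), ← ENNReal.ofReal_natCast, ← ENNReal.ofReal_one,
          ← ENNReal.ofReal_add (by positivity) zero_le_one, ← ENNReal.ofReal_mul (by positivity),
          mul_pow, Real.sq_sqrt (by positivity)]
        ring_nf

theorem measure_exists_localTime_pow_three_ge_le (hη : IsRademacherFamily η μ) (n : ℕ) {a : ℝ}
    (ha : 0 < a) :
    μ {ω | ∃ y, a ≤ (localTime η n y ω : ℝ) ^ 3} ≤ ENNReal.ofReal (24 * (n + 1) ^ 2 / a) := by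
  have hmeas := measurable_card_walkCoincidences hη.measurable n
  have hevent : {ω | ∃ y, a ≤ (localTime η n y ω : ℝ) ^ 3}
      ⊆ {ω | ENNReal.ofReal a ≤ 6 * #(walkCoincidences η n ω)} := by
    rintro ω ⟨y, hy⟩
    calc ENNReal.ofReal a ≤ ENNReal.ofReal ((localTime η n y ω : ℝ) ^ 3) :=
          ENNReal.ofReal_le_ofReal hy
      _ = (localTime η n y ω ^ 3 : ℕ) := by rw [← ENNReal.ofReal_natCast, Nat.cast_pow]
      _ ≤ (6 * #(walkCoincidences η n ω) : ℕ) := Nat.cast_le.2 (localTime_pow_three_le η n y ω)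
      _ = 6 * #(walkCoincidences η n ω) := by rw [Nat.cast_mul, Nat.cast_ofNat]
  calc μ {ω | ∃ y, a ≤ (localTime η n y ω : ℝ) ^ 3}
      ≤ (∫⁻ ω, 6 * #(walkCoincidences η n ω) ∂μ) / ENNReal.ofReal a :=
        (measure_mono hevent).trans (meas_ge_le_lintegral_div (hmeas.const_mul 6).aemeasurable
          (by simpa using ha) ENNReal.ofReal_ne_top)
    _ ≤ 6 * ENNReal.ofReal (4 * (n + 1) ^ 2) / ENNReal.ofReal a := by
        rw [lintegral_const_mul _ hmeas]
        gcongr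
        exact lintegral_card_walkCoincidences_le hη n
    _ = ENNReal.ofReal (24 * (n + 1) ^ 2 / a) := by
        rw [← ENNReal.ofReal_ofNat 6, ← ENNReal.ofReal_mul (by norm_num),
          ← ENNReal.ofReal_div_of_pos ha]
        ring_nf

theorem measure_exists_localTime_gt_le (hη : IsRademacherFamily η μ) {n : ℕ} (hn : 1 ≤ n)
    {ε : ℝ} (hε : 0 < ε) :
    μ {ω | ∃ y : ℤ, (localTime η n y ω : ℝ) > ε * (n : ℝ) ^ (3/4 : ℝ)}
      ≤ ENNReal.ofReal (96 / (ε ^ 3 * (n : ℝ) ^ (1/4 : ℝ))) := by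
  set r := (n : ℝ) ^ (1/4 : ℝ)
  have hr : 1 ≤ r := Real.one_le_rpow (by exact_mod_cast hn) (by norm_num)
  have hpow : ∀ k : ℕ, (n : ℝ) ^ (k / 4 : ℝ) = r ^ k := fun k => by
    rw [← Real.rpow_natCast, ← Real.rpow_mul (Nat.cast_nonneg _)]
    ring_nf
  have hn_r : (n : ℝ) = r ^ 4 := by rw [← hpow 4]; norm_num
  have h34 : (n : ℝ) ^ (3/4 : ℝ) = r ^ 3 := by rw [← hpow 3]; norm_num
  have hpoly : (r ^ 4 + 1) ^ 2 ≤ 4 * r ^ 8 := by nlinarith [one_le_pow₀ (n := 4) hr]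
  calc μ {ω | ∃ y : ℤ, (localTime η n y ω : ℝ) > ε * (n : ℝ) ^ (3/4 : ℝ)}
      ≤ μ {ω | ∃ y, (ε * r ^ 3) ^ 3 ≤ (localTime η n y ω : ℝ) ^ 3} :=
        measure_mono fun ω ⟨y, hy⟩ =>
          ⟨y, pow_le_pow_left₀ (by positivity) (h34 ▸ hy.le) 3⟩
    _ ≤ ENNReal.ofReal (24 * (n + 1) ^ 2 / (ε * r ^ 3) ^ 3) :=
        measure_exists_localTime_pow_three_ge_le hη n (by positivity)
    _ ≤ ENNReal.ofReal (96 / (ε ^ 3 * r)) := by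
        refine ENNReal.ofReal_le_ofReal ?_
        rw [hn_r, div_le_div_iff₀ (by positivity) (by positivity)]
        calc 24 * (r ^ 4 + 1) ^ 2 * (ε ^ 3 * r) ≤ 24 * (4 * r ^ 8) * (ε ^ 3 * r) := by gcongr
          _ = 96 * (ε * r ^ 3) ^ 3 := by ring

end Moment

/-- In `P`-probability, `n^{-3/4} · sup_{y ∈ ℤ} N_n(y) → 0`: for every `ε > 0`,
`P(sup_y N_n(y) > ε n^{3/4}) → 0` as `n → ∞`. -/
theorem sup_localTime_tendsto_zero_in_probability
    {Ω : Type*} [MeasureSpace Ω] [IsProbabilityMeasure (ℙ : Measure Ω)]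
    (η : ℕ → Ω → ℤ)
    (hη_meas : ∀ k, Measurable (η k))
    (hη_indep : iIndepFun η ℙ)
    (hη_one : ∀ k, ℙ {ω | η k ω = 1} = 1/2)
    (hη_negone : ∀ k, ℙ {ω | η k ω = -1} = 1/2) :
    ∀ ε > (0 : ℝ),
      Tendsto (fun n : ℕ =>
          ℙ {ω | ∃ y : ℤ, (localTime η n y ω : ℝ) > ε * (n : ℝ) ^ (3/4 : ℝ)})
        atTop (nhds 0) := by
  intro ε hε
  have hη : IsRademacherFamily η ℙ := ⟨hη_meas, hη_indep, hη_one, hη_negone⟩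
  have hbound : Tendsto (fun n : ℕ => ENNReal.ofReal (96 / (ε ^ 3 * (n : ℝ) ^ (1/4 : ℝ))))
      atTop (nhds 0) := by
    rw [← ENNReal.ofReal_zero]
    exact ENNReal.tendsto_ofReal (tendsto_const_nhds.div_atTop
      (((tendsto_rpow_atTop (by norm_num)).comp tendsto_natCast_atTop_atTop).const_mul_atTop
        (by positivity)))
  exact tendsto_of_tendsto_of_tendsto_of_le_of_le' tendsto_const_nhds hbound
    (Eventually.of_forall fun _ => zero_le)
    ((eventually_ge_atTop 1).mono fun n hn => measure_exists_localTime_gt_le hη hn hε)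
end
end

section
/- For all integers 1 ≤ k ≤ n, E[ ( X_n − X_k )² ] ≤ E[ (ξ_1^{(0)})² ] · E[ Σ_{x∈ℤ} ( N_{n−1}(x) − N_{k−1}(x) )² ]. -/
/-!
Write `X_n - X_k = ∑_y ε_y W_y`, where `W_y` is the sum of the `ξ_i^{(y)}` with
`N_{k-1}(y) < i ≤ N_{n-1}(y)`, i.e. of the variables collected at `y` during the visits at times
in `(k - 1, n - 1]`; since the walk moves by `±1`, sites with `|y| > k` are not visited before
time `k`, so both walks may be summed over the same sites.
The scenery signs are orthonormal and independent of `(Y, ξ)` (this follows from `ε ⊥ Y` and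
`ξ ⊥ (Y, ε)`), hence `E[(X_n - X_k)²] = ∑_y E[W_y²]`. Expanding `W_y²` and using that `ξ` is
independent of `Y`, each cross term is `E[1_i 1_j] E[ξ_i ξ_j]`, and
`E[ξ_i ξ_j] ≤ E[ξ²]` because for `i ≠ j` it equals `(E ξ)² ≤ E[ξ²]`. Summing over `i, j`
turns `∑ E[1_i 1_j]` into `E[(N_{n-1}(y) - N_{k-1}(y))²]`.
-/

open MeasureTheory ProbabilityTheory Filter

noncomputable section

/-- The horizontal embedded walk `X_n = Σ_{y∈ℤ} ε_y Σ_{i=1}^{N_{n−1}(y)} ξ_i^{(y)}`,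
with `X_0 = 0`.  Since `|Y_k| ≤ k ≤ n - 1`, the sum over `y ∈ ℤ` reduces to the sum
over `y ∈ [-n, n]`. -/
def hwalk {Ω : Type*} (η : ℕ → Ω → ℤ) (ε : ℤ → Ω → ℤ) (ξ : ℕ → ℤ → Ω → ℕ) :
    ℕ → Ω → ℤ
  | 0, _ => 0
  | n + 1, ω => ∑ y ∈ Finset.Icc (-(n + 1 : ℤ)) (n + 1),
      ε y ω * ∑ i ∈ Finset.Icc 1 (localTime η n y ω), (ξ i y ω : ℤ)

open Finset

namespace ProbabilityTheory

variable {Ω : Type*} {mΩ : MeasurableSpace Ω} {μ : Measure Ω}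

theorem IndepFun.indepFun_prodMk_of_indepFun_prodMk {α β γ : Type*} [MeasurableSpace α]
    [MeasurableSpace β] [MeasurableSpace γ] [IsZeroOrProbabilityMeasure μ]
    {X : Ω → α} {Y : Ω → β} {Z : Ω → γ} (hX : Measurable X) (hY : Measurable Y)
    (hZ : Measurable Z) (hXY : IndepFun X Y μ) (hZXY : IndepFun Z (fun ω => (X ω, Y ω)) μ) :
    IndepFun X (fun ω => (Y ω, Z ω)) μ := by
  rw [IndepFun_iff_Indep]
  refine IndepSets.indep hX.comap_le (hY.prodMk hZ).comap_le
    (@MeasurableSpace.isPiSystem_measurableSet Ω (.comap X inferInstance))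
    (isPiSystem_prod.comap (fun ω => (Y ω, Z ω)))
    (@MeasurableSpace.generateFrom_measurableSet Ω (.comap X inferInstance)).symm
    (by rw [← generateFrom_prod, MeasurableSpace.comap_generateFrom]; rfl) ?_
  rw [IndepSets_iff]
  rintro _ _ ⟨A, hA, rfl⟩ ⟨_, ⟨B, hB, C, hC, rfl⟩, rfl⟩
  have hZY : IndepFun Z Y μ := hZXY.comp measurable_id measurable_snd
  have hXYZ := hZXY.meas_inter ⟨C, hC, rfl⟩ ⟨A ×ˢ B, hA.prod hB, rfl⟩
  have hYZ := hZY.meas_inter ⟨C, hC, rfl⟩ ⟨B, hB, rfl⟩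
  simp only [Set.mk_preimage_prod] at hXYZ ⊢
  rw [Set.inter_comm] at hXYZ hYZ
  rw [← Set.inter_assoc, hXYZ, hXY.meas_inter ⟨A, hA, rfl⟩ ⟨B, hB, rfl⟩, hYZ]
  ring

theorem integral_sq_sum_mul_of_indepFun {ι : Type*} (s : Finset ι) {U V : ι → Ω → ℝ}
    (hUV : IndepFun (fun ω i => U i ω) (fun ω i => V i ω) μ)
    (hU : ∀ i j, Integrable (fun ω => U i ω * U j ω) μ)
    (hV : ∀ i j, Integrable (fun ω => V i ω * V j ω) μ) :
    ∫ ω, (∑ i ∈ s, U i ω * V i ω) ^ 2 ∂μ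
      = ∑ i ∈ s, ∑ j ∈ s, (∫ ω, U i ω * U j ω ∂μ) * ∫ ω, V i ω * V j ω ∂μ := by
  have hind : ∀ i j, IndepFun (fun ω => U i ω * U j ω) (fun ω => V i ω * V j ω) μ :=
    fun i j => hUV.comp (φ := fun u : ι → ℝ => u i * u j) (ψ := fun v : ι → ℝ => v i * v j)
      (by fun_prop) (by fun_prop)
  have hint : ∀ i j, Integrable (fun ω => U i ω * U j ω * (V i ω * V j ω)) μ :=
    fun i j => (hind i j).integrable_mul (hU i j) (hV i j)
  have hexp : ∀ ω, (∑ i ∈ s, U i ω * V i ω) ^ 2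
      = ∑ i ∈ s, ∑ j ∈ s, U i ω * U j ω * (V i ω * V j ω) := fun ω => by
    rw [sq, sum_mul_sum]
    exact sum_congr rfl fun i _ => sum_congr rfl fun j _ => by ring
  simp_rw [hexp]
  rw [integral_finsetSum _ fun i _ => integrable_finsetSum _ fun j _ => hint i j]
  refine sum_congr rfl fun i _ => ?_
  rw [integral_finsetSum _ fun j _ => hint i j]
  exact sum_congr rfl fun j _ => (hind i j).integral_mul_eq_mul_integral
    (hU i j).aestronglyMeasurable (hV i j).aestronglyMeasurable

theorem integral_sq_sum_mul_eq_sum_integral_sq {ι : Type*} (s : Finset ι) {σ W : ι → Ω → ℝ}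
    (hσW : IndepFun (fun ω i => σ i ω) (fun ω i => W i ω) μ)
    (hσ : ∀ i, MemLp (σ i) 2 μ) (hW : ∀ i, MemLp (W i) 2 μ)
    (hσ_sq : ∀ i, ∫ ω, σ i ω * σ i ω ∂μ = 1)
    (hσ_orth : ∀ i j, i ≠ j → ∫ ω, σ i ω * σ j ω ∂μ = 0) :
    ∫ ω, (∑ i ∈ s, σ i ω * W i ω) ^ 2 ∂μ = ∑ i ∈ s, ∫ ω, W i ω ^ 2 ∂μ := by
  rw [integral_sq_sum_mul_of_indepFun s hσW (fun i j => (hσ i).integrable_mul (hσ j))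
    (fun i j => (hW i).integrable_mul (hW j))]
  refine sum_congr rfl fun i hi => ?_
  rw [sum_eq_single_of_mem i hi fun j _ hji => by rw [hσ_orth i j hji.symm, zero_mul],
    hσ_sq, one_mul]
  simp_rw [sq]

theorem integral_sq_sum_mul_le {ι : Type*} (s : Finset ι) {A Z : ι → Ω → ℝ} {C : ℝ}
    (hAZ : IndepFun (fun ω i => A i ω) (fun ω i => Z i ω) μ)
    (hA : ∀ i, MemLp (A i) 2 μ) (hA_nonneg : ∀ i ω, 0 ≤ A i ω) (hZ : ∀ i, MemLp (Z i) 2 μ)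
    (hZC : ∀ i j, ∫ ω, Z i ω * Z j ω ∂μ ≤ C) :
    ∫ ω, (∑ i ∈ s, A i ω * Z i ω) ^ 2 ∂μ ≤ C * ∫ ω, (∑ i ∈ s, A i ω) ^ 2 ∂μ := by
  have hAA : ∀ i j, Integrable (fun ω => A i ω * A j ω) μ :=
    fun i j => (hA i).integrable_mul (hA j)
  rw [integral_sq_sum_mul_of_indepFun s hAZ hAA fun i j => (hZ i).integrable_mul (hZ j)]
  simp_rw [sq, sum_mul_sum]
  rw [integral_finsetSum _ fun i _ => integrable_finsetSum _ fun j _ => hAA i j, mul_sum]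
  refine sum_le_sum fun i _ => ?_
  rw [integral_finsetSum _ fun j _ => hAA i j, mul_sum]
  refine sum_le_sum fun j _ => ?_
  rw [mul_comm C]
  exact mul_le_mul_of_nonneg_left (hZC i j)
    (integral_nonneg fun ω => mul_nonneg (hA_nonneg i ω) (hA_nonneg j ω))

theorem integral_mul_le_integral_sq_of_identDistrib [IsProbabilityMeasure μ] {ι : Type*}
    {Z : ι → Ω → ℝ} (hZ : iIndepFun Z μ) {i₀ : ι} (hident : ∀ i, IdentDistrib (Z i) (Z i₀) μ μ)
    (hZ₀ : MemLp (Z i₀) 2 μ) (i j : ι) :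
    ∫ ω, Z i ω * Z j ω ∂μ ≤ ∫ ω, Z i₀ ω ^ 2 ∂μ := by
  by_cases hij : i = j
  · subst hij
    simp_rw [← sq]
    exact ((hident i).comp (measurable_id.pow_const 2)).integral_eq.le
  · have hsplit : ∫ ω, Z i ω * Z j ω ∂μ = (∫ ω, Z i ω ∂μ) * ∫ ω, Z j ω ∂μ :=
      (hZ.indepFun hij).integral_mul_eq_mul_integral
        (hident i).aemeasurable_fst.aestronglyMeasurable
        (hident j).aemeasurable_fst.aestronglyMeasurable
    rw [hsplit, (hident i).integral_eq, (hident j).integral_eq, ← sq]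
    have hvar := variance_nonneg (Z i₀) μ
    rw [variance_eq_sub hZ₀] at hvar
    simpa using hvar

theorem map_eq_geometricMeasure {X : Ω → ℕ} (hX : Measurable X) {p : ℝ} (hp0 : 0 < p)
    (hp1 : p ≤ 1) (hlaw : ∀ k, μ {ω | X ω = k} = ENNReal.ofReal (p * (1 - p) ^ k)) :
    μ.map X = geometricMeasure ⟨p, hp0.le, hp1⟩ := by
  refine Measure.ext_of_singleton fun k => ?_
  rw [Measure.map_apply hX (measurableSet_singleton k),
    geometricMeasure_singleton fun h => hp0.ne' (congrArg Subtype.val h), mul_comm]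
  exact hlaw k

theorem memLp_two_natCast_geometricMeasure {p : unitInterval} (hp : p ≠ 0) :
    MemLp (fun n : ℕ => (n : ℝ)) 2 (geometricMeasure p) := by
  refine (memLp_two_iff_integrable_sq (measurable_of_countable _).aestronglyMeasurable).2 ?_
  rw [integrable_geometricMeasure_iff hp]
  have hp0 : (0 : ℝ) < p := lt_of_le_of_ne p.2.1 fun h => hp (Subtype.ext h.symm)
  have hr : ‖(1 - p : ℝ)‖ < 1 := by
    rw [Real.norm_eq_abs, abs_lt]; constructor <;> linarith [p.2.2]
  refine ((summable_pow_mul_geometric_of_norm_lt_one 2 hr).mul_right (p : ℝ)).congr fun n => ?_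
  simp only [norm_pow, Real.norm_natCast]
  ring

section Sign

variable [IsProbabilityMeasure μ] {Z : Ω → ℤ} (hZ : Measurable Z)
  (h1 : μ {ω | Z ω = 1} = 1 / 2) (h2 : μ {ω | Z ω = -1} = 1 / 2)

include hZ h1 h2

theorem ae_eq_one_or_eq_neg_one_of_measure_eq_half : ∀ᵐ ω ∂μ, Z ω = 1 ∨ Z ω = -1 := by
  have hdisj : Disjoint {ω | Z ω = 1} {ω | Z ω = -1} :=
    Set.disjoint_left.2 fun ω h h' => by simp_all
  rw [ae_iff_measure_eq, Set.ofPred_or, measure_union hdisj (hZ (measurableSet_singleton _)),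
    h1, h2, ENNReal.add_halves, measure_univ]
  exact (hZ (measurableSet_singleton _)).nullMeasurableSet.union
    (hZ (measurableSet_singleton _)).nullMeasurableSet

theorem memLp_intCast_of_measure_eq_half (p : ENNReal) : MemLp (fun ω => (Z ω : ℝ)) p μ :=
  .of_bound ((measurable_of_countable (Int.cast : ℤ → ℝ)).comp hZ).aestronglyMeasurable 1
    ((ae_eq_one_or_eq_neg_one_of_measure_eq_half hZ h1 h2).mono fun ω h => by
      rcases h with h | h <;> simp [h])

theorem integral_intCast_mul_self_of_measure_eq_half : ∫ ω, (Z ω : ℝ) * Z ω ∂μ = 1 := by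
  rw [integral_congr_ae ((ae_eq_one_or_eq_neg_one_of_measure_eq_half hZ h1 h2).mono fun ω h =>
    show (Z ω : ℝ) * Z ω = 1 by rcases h with h | h <;> simp [h])]
  simp

theorem integral_intCast_eq_zero_of_measure_eq_half : ∫ ω, (Z ω : ℝ) ∂μ = 0 := by
  have hm1 : MeasurableSet {ω | Z ω = 1} := hZ (measurableSet_singleton 1)
  have hm2 : MeasurableSet {ω | Z ω = -1} := hZ (measurableSet_singleton (-1))
  have hae : (fun ω => (Z ω : ℝ))
      =ᵐ[μ] fun ω => {ω | Z ω = 1}.indicator 1 ω - {ω | Z ω = -1}.indicator 1 ω := by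
    filter_upwards [ae_eq_one_or_eq_neg_one_of_measure_eq_half hZ h1 h2] with ω hω
    rcases hω with h | h <;> simp [Set.indicator, h]
  rw [integral_congr_ae hae, integral_sub ((integrable_const 1).indicator hm1)
    ((integrable_const 1).indicator hm2), integral_indicator_one hm1, integral_indicator_one hm2,
    measureReal_def, measureReal_def, h1, h2, sub_self]

end Sign

end ProbabilityTheory

section Walk

variable {Ω : Type*} {η : ℕ → Ω → ℤ}

theorem abs_walk_le {ω : Ω} (hη : ∀ j, |η j ω| ≤ 1) (n : ℕ) : |walk η n ω| ≤ n :=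
  (abs_sum_le_sum_abs _ _).trans (by simpa using sum_le_sum fun k (_ : k ∈ range n) => hη (k + 1))

theorem localTime_eq_zero_of_lt_abs {ω : Ω} (hη : ∀ j, |η j ω| ≤ 1) {n : ℕ} {y : ℤ}
    (hy : (n : ℤ) < |y|) : localTime η n y ω = 0 := by
  refine card_eq_zero.2 (filter_eq_empty_iff.2 fun k hk hwalk => ?_)
  have hk := mem_range.1 hk
  have := abs_walk_le hη k
  rw [hwalk] at this
  omega

theorem localTime_mono {m n : ℕ} (h : m ≤ n) (y : ℤ) (ω : Ω) :
    localTime η m y ω ≤ localTime η n y ω :=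
  card_le_card (filter_subset_filter _ (range_subset_range.2 (by omega)))

theorem localTime_le (n : ℕ) (y : ℤ) (ω : Ω) : localTime η n y ω ≤ n + 1 :=
  (card_filter_le _ _).trans (card_range _).le

theorem measurable_localTime [MeasurableSpace Ω] (hη : ∀ j, Measurable (η j)) (n : ℕ) (y : ℤ) :
    Measurable (localTime η n y) := by
  have hwalk : ∀ k, Measurable (walk η k) := fun k => measurable_sum _ fun j _ => hη (j + 1)
  have : localTime η n y = fun ω => ∑ k ∈ range (n + 1), if walk η k ω = y then 1 else 0 :=
    funext fun ω => card_filter _ _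
  rw [this]
  exact measurable_sum _ fun k _ =>
    Measurable.ite (hwalk k (measurableSet_singleton y)) measurable_const measurable_const

/-- Indicator that the `i`-th visit of the walk to `y` happens at a time in `(k, n]`. -/
def visitBetween (η : ℕ → Ω → ℤ) (k n i : ℕ) (y : ℤ) (ω : Ω) : ℝ :=
  if localTime η k y ω < i ∧ i ≤ localTime η n y ω then 1 else 0

theorem visitBetween_nonneg (k n i : ℕ) (y : ℤ) (ω : Ω) : 0 ≤ visitBetween η k n i y ω := by
  unfold visitBetween; split_ifs <;> norm_num

theorem visitBetween_le_one (k n i : ℕ) (y : ℤ) (ω : Ω) : visitBetween η k n i y ω ≤ 1 := by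
  unfold visitBetween; split_ifs <;> norm_num

theorem measurable_visitBetween [MeasurableSpace Ω] (hη : ∀ j, Measurable (η j)) (k n i : ℕ)
    (y : ℤ) : Measurable (visitBetween η k n i y) :=
  Measurable.ite ((measurableSet_lt (measurable_localTime hη k y) measurable_const).inter
    (measurableSet_le measurable_const (measurable_localTime hη n y))) measurable_const
    measurable_const

theorem sum_visitBetween_mul (k n : ℕ) (y : ℤ) (ω : Ω) (f : ℕ → ℝ) :
    ∑ i ∈ Icc 1 (n + 1), visitBetween η k n i y ω * f i
      = ∑ i ∈ Ioc (localTime η k y ω) (localTime η n y ω), f i := by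
  simp only [visitBetween, ite_mul, one_mul, zero_mul]
  rw [← sum_filter]
  congr 1
  ext i
  have := localTime_le (η := η) n y ω
  simp only [mem_filter, mem_Icc, mem_Ioc]
  omega

theorem sum_visitBetween {k n : ℕ} (hkn : k ≤ n) (y : ℤ) (ω : Ω) :
    ∑ i ∈ Icc 1 (n + 1), visitBetween η k n i y ω
      = (localTime η n y ω : ℝ) - localTime η k y ω := by
  simpa [Nat.cast_sub (localTime_mono hkn y ω)] using sum_visitBetween_mul k n y ω fun _ => 1

/-- The sum `W_y` of the `ξ_i^{(y)}` collected at `y` during the visits at times in `(k, n]`. -/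
def siteIncrement (η : ℕ → Ω → ℤ) (ξ : ℕ → ℤ → Ω → ℕ) (k n : ℕ) (y : ℤ) (ω : Ω) : ℝ :=
  ∑ i ∈ Icc 1 (n + 1), visitBetween η k n i y ω * ξ i y ω

theorem measurable_siteIncrement [MeasurableSpace Ω] {ξ : ℕ → ℤ → Ω → ℕ}
    (hη : ∀ j, Measurable (η j)) (hξ : ∀ i y, Measurable (ξ i y)) (k n : ℕ) (y : ℤ) :
    Measurable (siteIncrement η ξ k n y) :=
  measurable_sum _ fun i _ => (measurable_visitBetween hη k n i y).mul
    ((measurable_of_countable (Nat.cast : ℕ → ℝ)).comp (hξ i y))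

theorem hwalk_succ_sub_hwalk_succ {ε : ℤ → Ω → ℤ} {ξ : ℕ → ℤ → Ω → ℕ} {ω : Ω}
    (hη : ∀ j, |η j ω| ≤ 1) {k n : ℕ} (hkn : k ≤ n) :
    (hwalk η ε ξ (n + 1) ω : ℝ) - hwalk η ε ξ (k + 1) ω
      = ∑ y ∈ Icc (-(n + 1 : ℤ)) (n + 1), (ε y ω : ℝ) * siteIncrement η ξ k n y ω := by
  have hk : hwalk η ε ξ (k + 1) ω = ∑ y ∈ Icc (-(n + 1 : ℤ)) (n + 1),
      ε y ω * ∑ i ∈ Icc 1 (localTime η k y ω), (ξ i y ω : ℤ) := by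
    refine sum_subset (Icc_subset_Icc (by omega) (by omega)) fun y _ hy => ?_
    rw [mem_Icc, not_and_or, not_le, not_le] at hy
    rw [localTime_eq_zero_of_lt_abs hη (lt_abs.2 (by omega))]
    simp
  rw [hk, hwalk]
  push_cast
  rw [← sum_sub_distrib]
  refine sum_congr rfl fun y _ => ?_
  have hIoc : ∀ a : ℕ, Icc 1 a = Ioc 0 a := Icc_add_one_left_eq_Ioc 0
  rw [← mul_sub, siteIncrement, sum_visitBetween_mul, hIoc, hIoc,
    ← sum_Ioc_consecutive _ (Nat.zero_le _) (localTime_mono hkn y ω), add_sub_cancel_left]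

end Walk

section HorizontalWalk

variable {Ω : Type*} {mΩ : MeasurableSpace Ω} {μ : Measure Ω} [IsProbabilityMeasure μ]
  {η : ℕ → Ω → ℤ} {ε : ℤ → Ω → ℤ} {ξ : ℕ → ℤ → Ω → ℕ}

theorem integrable_sq_localTime_sub (hη : ∀ j, Measurable (η j)) {k n : ℕ} (hkn : k ≤ n)
    (y : ℤ) : Integrable (fun ω => ((localTime η n y ω : ℝ) - localTime η k y ω) ^ 2) μ := by
  have hn := measurable_localTime hη n y
  have hk := measurable_localTime hη k y
  refine Integrable.of_bound (by fun_prop) ((n + 1) ^ 2) (ae_of_all _ fun ω => ?_)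
  have hkn' : (localTime η k y ω : ℝ) ≤ localTime η n y ω := by
    exact_mod_cast localTime_mono hkn y ω
  have hn' : (localTime η n y ω : ℝ) ≤ n + 1 := by exact_mod_cast localTime_le n y ω
  rw [Real.norm_of_nonneg (sq_nonneg _)]
  exact pow_le_pow_left₀ (sub_nonneg.2 hkn')
    (by linarith [(localTime η k y ω).cast_nonneg' (α := ℝ)]) 2

theorem memLp_visitBetween (hη : ∀ j, Measurable (η j)) (p : ENNReal) (k n i : ℕ) (y : ℤ) :
    MemLp (visitBetween η k n i y) p μ := by
  refine .of_bound (measurable_visitBetween hη k n i y).aestronglyMeasurable 1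
    (ae_of_all _ fun ω => ?_)
  rw [Real.norm_of_nonneg (visitBetween_nonneg k n i y ω)]
  exact visitBetween_le_one k n i y ω

theorem memLp_siteIncrement (hη : ∀ j, Measurable (η j))
    (hξ : ∀ i y, MemLp (fun ω => (ξ i y ω : ℝ)) 2 μ) (k n : ℕ) (y : ℤ) :
    MemLp (siteIncrement η ξ k n y) 2 μ := by
  refine memLp_finsetSum _ fun i _ => (hξ i y).of_le
    ((memLp_visitBetween hη 2 k n i y).1.mul (hξ i y).1) (ae_of_all _ fun ω => ?_)
  rw [norm_mul]
  refine mul_le_of_le_one_left (norm_nonneg _) ?_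
  rw [Real.norm_of_nonneg (visitBetween_nonneg k n i y ω)]
  exact visitBetween_le_one k n i y ω

theorem indepFun_scenery_siteIncrement (hη_meas : ∀ k, Measurable (η k))
    (hε_meas : ∀ y, Measurable (ε y)) (hξ_meas : ∀ i y, Measurable (ξ i y))
    (hεη_indep : IndepFun (fun ω (k : ℕ) => η k ω) (fun ω (y : ℤ) => ε y ω) μ)
    (hξηε_indep : IndepFun (fun ω (iy : ℕ × ℤ) => ξ iy.1 iy.2 ω)
      (fun ω => ((fun k : ℕ => η k ω), (fun y : ℤ => ε y ω))) μ) (k n : ℕ) :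
    IndepFun (fun ω y => (ε y ω : ℝ)) (fun ω y => siteIncrement η ξ k n y ω) μ := by
  have hε_ηξ := IndepFun.indepFun_prodMk_of_indepFun_prodMk (measurable_pi_lambda _ hε_meas)
    (measurable_pi_lambda _ hη_meas) (measurable_pi_lambda _ fun iy : ℕ × ℤ => hξ_meas iy.1 iy.2)
    hεη_indep.symm (hξηε_indep.comp measurable_id measurable_swap)
  have hφ : Measurable fun (e : ℤ → ℤ) (y : ℤ) => (e y : ℝ) :=
    measurable_pi_lambda _ fun y =>
      (measurable_of_countable (Int.cast : ℤ → ℝ)).comp (measurable_pi_apply y)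
  -- `siteIncrement η ξ k n y ω` is, definitionally, this function of the paths of `η` and `ξ`.
  have hψ : Measurable fun (gf : (ℕ → ℤ) × (ℕ × ℤ → ℕ)) (y : ℤ) =>
      siteIncrement (fun j gf => gf.1 j) (fun i y gf => gf.2 (i, y)) k n y gf :=
    measurable_pi_lambda _ fun y => measurable_siteIncrement
      (fun j => (measurable_pi_apply j).comp measurable_fst)
      (fun i y => (measurable_pi_apply (i, y)).comp measurable_snd) k n y
  exact hε_ηξ.comp hφ hψ

theorem integral_sq_hwalk_sub_eq (hη_meas : ∀ k, Measurable (η k))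
    (hη_one : ∀ k, μ {ω | η k ω = 1} = 1 / 2) (hη_negone : ∀ k, μ {ω | η k ω = -1} = 1 / 2)
    (hε_meas : ∀ y, Measurable (ε y)) (hε_indep : iIndepFun ε μ)
    (hε_one : ∀ y, μ {ω | ε y ω = 1} = 1 / 2) (hε_negone : ∀ y, μ {ω | ε y ω = -1} = 1 / 2)
    (hεη_indep : IndepFun (fun ω (k : ℕ) => η k ω) (fun ω (y : ℤ) => ε y ω) μ)
    (hξ_meas : ∀ i y, Measurable (ξ i y)) (hξ_L2 : ∀ i y, MemLp (fun ω => (ξ i y ω : ℝ)) 2 μ)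
    (hξηε_indep : IndepFun (fun ω (iy : ℕ × ℤ) => ξ iy.1 iy.2 ω)
      (fun ω => ((fun k : ℕ => η k ω), (fun y : ℤ => ε y ω))) μ)
    {k n : ℕ} (hkn : k ≤ n) :
    ∫ ω, ((hwalk η ε ξ (n + 1) ω : ℝ) - hwalk η ε ξ (k + 1) ω) ^ 2 ∂μ
      = ∑ y ∈ Icc (-(n + 1 : ℤ)) (n + 1), ∫ ω, siteIncrement η ξ k n y ω ^ 2 ∂μ := by
  have hη_bdd : ∀ᵐ ω ∂μ, ∀ j, |η j ω| ≤ 1 := ae_all_iff.2 fun j =>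
    (ae_eq_one_or_eq_neg_one_of_measure_eq_half (hη_meas j) (hη_one j) (hη_negone j)).mono
      fun ω h => by rcases h with h | h <;> simp [h]
  calc _ = ∫ ω, (∑ y ∈ Icc (-(n + 1 : ℤ)) (n + 1),
          (ε y ω : ℝ) * siteIncrement η ξ k n y ω) ^ 2 ∂μ :=
        integral_congr_ae (hη_bdd.mono fun ω h => by simp only [hwalk_succ_sub_hwalk_succ h hkn])
    _ = _ := integral_sq_sum_mul_eq_sum_integral_sq _
      (indepFun_scenery_siteIncrement hη_meas hε_meas hξ_meas hεη_indep hξηε_indep k n)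
      (fun y => memLp_intCast_of_measure_eq_half (hε_meas y) (hε_one y) (hε_negone y) 2)
      (memLp_siteIncrement hη_meas hξ_L2 k n)
      (fun y => integral_intCast_mul_self_of_measure_eq_half (hε_meas y) (hε_one y) (hε_negone y))
      (fun y z hyz => ?_)
  have hsplit : ∫ ω, (ε y ω : ℝ) * ε z ω ∂μ = (∫ ω, (ε y ω : ℝ) ∂μ) * ∫ ω, (ε z ω : ℝ) ∂μ :=
    ((hε_indep.indepFun hyz).comp (measurable_of_countable (Int.cast : ℤ → ℝ))
      (measurable_of_countable (Int.cast : ℤ → ℝ))).integral_mul_eq_mul_integral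
      (memLp_intCast_of_measure_eq_half (hε_meas y) (hε_one y) (hε_negone y) 1).1
      (memLp_intCast_of_measure_eq_half (hε_meas z) (hε_one z) (hε_negone z) 1).1
  rw [hsplit, integral_intCast_eq_zero_of_measure_eq_half (hε_meas y) (hε_one y) (hε_negone y),
    zero_mul]

theorem integral_sq_siteIncrement_le (hη_meas : ∀ k, Measurable (η k))
    (hξ_indep : iIndepFun (fun iy : ℕ × ℤ => ξ iy.1 iy.2) μ)
    (hξ_L2 : ∀ i y, MemLp (fun ω => (ξ i y ω : ℝ)) 2 μ)
    (hξ_ident : ∀ i y, IdentDistrib (ξ i y) (ξ 1 0) μ μ)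
    (hξηε_indep : IndepFun (fun ω (iy : ℕ × ℤ) => ξ iy.1 iy.2 ω)
      (fun ω => ((fun k : ℕ => η k ω), (fun y : ℤ => ε y ω))) μ)
    {k n : ℕ} (hkn : k ≤ n) (y : ℤ) :
    ∫ ω, siteIncrement η ξ k n y ω ^ 2 ∂μ
      ≤ (∫ ω, (ξ 1 0 ω : ℝ) ^ 2 ∂μ) *
          ∫ ω, ((localTime η n y ω : ℝ) - localTime η k y ω) ^ 2 ∂μ := by
  have hind : IndepFun (fun ω i => visitBetween η k n i y ω) (fun ω i => (ξ i y ω : ℝ)) μ := by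
    have hφ : Measurable fun (gh : (ℕ → ℤ) × (ℤ → ℤ)) (i : ℕ) =>
        visitBetween (fun j gh => gh.1 j) k n i y gh :=
      measurable_pi_lambda _ fun i =>
        measurable_visitBetween (fun j => (measurable_pi_apply j).comp measurable_fst) k n i y
    have hψ : Measurable fun (f : ℕ × ℤ → ℕ) (i : ℕ) => (f (i, y) : ℝ) :=
      measurable_pi_lambda _ fun i =>
        (measurable_of_countable (Nat.cast : ℕ → ℝ)).comp (measurable_pi_apply (i, y))
    exact hξηε_indep.symm.comp hφ hψ
  have hZ : iIndepFun (fun (iy : ℕ × ℤ) ω => (ξ iy.1 iy.2 ω : ℝ)) μ :=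
    hξ_indep.comp _ fun _ => measurable_of_countable (Nat.cast : ℕ → ℝ)
  have hZ_ident (iy : ℕ × ℤ) :
      IdentDistrib (fun ω => (ξ iy.1 iy.2 ω : ℝ)) (fun ω => (ξ 1 0 ω : ℝ)) μ μ :=
    (hξ_ident iy.1 iy.2).comp (measurable_of_countable (Nat.cast : ℕ → ℝ))
  simp_rw [← sum_visitBetween hkn]
  exact integral_sq_sum_mul_le _ hind (memLp_visitBetween hη_meas 2 k n · y)
    (visitBetween_nonneg k n · y) (hξ_L2 · y) fun i j =>
      integral_mul_le_integral_sq_of_identDistrib hZ (i₀ := (1, 0)) hZ_ident (hξ_L2 1 0)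
        (i, y) (j, y)

end HorizontalWalk

theorem sq_hwalk_increment_le_general
    {Ω : Type*} [MeasureSpace Ω] [IsProbabilityMeasure (ℙ : Measure Ω)]
    (p : ℝ) (hp0 : 0 < p) (hp1 : p < 1)
    (η : ℕ → Ω → ℤ) (ε : ℤ → Ω → ℤ) (ξ : ℕ → ℤ → Ω → ℕ)
    (hη_meas : ∀ k, Measurable (η k))
    (hη_one : ∀ k, ℙ {ω | η k ω = 1} = 1/2)
    (hη_negone : ∀ k, ℙ {ω | η k ω = -1} = 1/2)
    (hε_meas : ∀ y, Measurable (ε y))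
    (hε_indep : iIndepFun ε ℙ)
    (hε_one : ∀ y, ℙ {ω | ε y ω = 1} = 1/2)
    (hε_negone : ∀ y, ℙ {ω | ε y ω = -1} = 1/2)
    (hεη_indep : IndepFun (fun ω (k : ℕ) => η k ω) (fun ω (y : ℤ) => ε y ω) ℙ)
    (hξ_meas : ∀ i y, Measurable (ξ i y))
    (hξ_indep : iIndepFun (fun iy : ℕ × ℤ => ξ iy.1 iy.2) ℙ)
    (hξ_geom : ∀ i y k, ℙ {ω | ξ i y ω = k} = ENNReal.ofReal (p * (1 - p) ^ k))
    (hξηε_indep : IndepFun (fun ω (iy : ℕ × ℤ) => ξ iy.1 iy.2 ω)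
      (fun ω => ((fun k : ℕ => η k ω), (fun y : ℤ => ε y ω))) ℙ) :
    ∀ k n : ℕ, 1 ≤ k → k ≤ n →
      (∫ ω, ((hwalk η ε ξ n ω : ℝ) - (hwalk η ε ξ k ω : ℝ)) ^ 2 ∂ℙ)
        ≤ (∫ ω, (ξ 1 0 ω : ℝ) ^ 2 ∂ℙ) *
          ∫ ω, (∑ x ∈ Finset.Icc (-(n : ℤ)) n,
            ((localTime η (n - 1) x ω : ℝ) - (localTime η (k - 1) x ω : ℝ)) ^ 2) ∂ℙ := by
  intro k n hk hkn
  obtain ⟨k, rfl⟩ : ∃ k', k = k' + 1 := ⟨k - 1, by omega⟩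
  obtain ⟨n, rfl⟩ : ∃ n', n = n' + 1 := ⟨n - 1, by omega⟩
  replace hkn : k ≤ n := by omega
  have hξ_law i y : Measure.map (ξ i y) ℙ = geometricMeasure ⟨p, hp0.le, hp1.le⟩ :=
    map_eq_geometricMeasure (hξ_meas i y) hp0 hp1.le (hξ_geom i y)
  have hξ_ident i y : IdentDistrib (ξ i y) (ξ 1 0) ℙ ℙ :=
    ⟨(hξ_meas i y).aemeasurable, (hξ_meas 1 0).aemeasurable, by rw [hξ_law, hξ_law]⟩
  have hξ_L2 i y : MemLp (fun ω => (ξ i y ω : ℝ)) 2 ℙ :=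
    (memLp_map_measure_iff (measurable_of_countable _).aestronglyMeasurable
      (hξ_meas i y).aemeasurable).1 <| hξ_law i y ▸
        memLp_two_natCast_geometricMeasure fun h => hp0.ne' (congrArg Subtype.val h)
  simp only [Nat.add_sub_cancel, Nat.cast_add, Nat.cast_one]
  rw [integral_sq_hwalk_sub_eq hη_meas hη_one hη_negone hε_meas hε_indep hε_one hε_negone
    hεη_indep hξ_meas hξ_L2 hξηε_indep hkn,
    integral_finsetSum _ fun y _ => integrable_sq_localTime_sub hη_meas hkn y, mul_sum]
  exact sum_le_sum fun y _ => integral_sq_siteIncrement_le hη_meas hξ_indep hξ_L2 hξ_ident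
    hξηε_indep hkn y

/-- For all `1 ≤ k ≤ n`,
`E[(X_n − X_k)²] ≤ E[(ξ_1^{(0)})²] · E[Σ_{x∈ℤ} (N_{n−1}(x) − N_{k−1}(x))²]`. -/
theorem sq_hwalk_increment_le
    {Ω : Type*} [MeasureSpace Ω] [IsProbabilityMeasure (ℙ : Measure Ω)]
    (p : ℝ) (hp0 : 0 < p) (hp1 : p < 1)
    (η : ℕ → Ω → ℤ) (ε : ℤ → Ω → ℤ) (ξ : ℕ → ℤ → Ω → ℕ)
    (hη_meas : ∀ k, Measurable (η k))
    (hη_indep : iIndepFun η ℙ)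
    (hη_one : ∀ k, ℙ {ω | η k ω = 1} = 1/2)
    (hη_negone : ∀ k, ℙ {ω | η k ω = -1} = 1/2)
    (hε_meas : ∀ y, Measurable (ε y))
    (hε_indep : iIndepFun ε ℙ)
    (hε_one : ∀ y, ℙ {ω | ε y ω = 1} = 1/2)
    (hε_negone : ∀ y, ℙ {ω | ε y ω = -1} = 1/2)
    (hεη_indep : IndepFun (fun ω (k : ℕ) => η k ω) (fun ω (y : ℤ) => ε y ω) ℙ)
    (hξ_meas : ∀ i y, Measurable (ξ i y))
    (hξ_indep : iIndepFun (fun iy : ℕ × ℤ => ξ iy.1 iy.2) ℙ)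
    (hξ_geom : ∀ i y k, ℙ {ω | ξ i y ω = k} = ENNReal.ofReal (p * (1 - p) ^ k))
    (hξηε_indep : IndepFun (fun ω (iy : ℕ × ℤ) => ξ iy.1 iy.2 ω)
      (fun ω => ((fun k : ℕ => η k ω), (fun y : ℤ => ε y ω))) ℙ) :
    ∀ k n : ℕ, 1 ≤ k → k ≤ n →
      (∫ ω, ((hwalk η ε ξ n ω : ℝ) - (hwalk η ε ξ k ω : ℝ)) ^ 2 ∂ℙ)
        ≤ (∫ ω, (ξ 1 0 ω : ℝ) ^ 2 ∂ℙ) *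
          ∫ ω, (∑ x ∈ Finset.Icc (-(n : ℤ)) n,
            ((localTime η (n - 1) x ω : ℝ) - (localTime η (k - 1) x ω : ℝ)) ^ 2) ∂ℙ :=
  sq_hwalk_increment_le_general p hp0 hp1 η ε ξ hη_meas hη_one hη_negone hε_meas hε_indep hε_one
    hε_negone hεη_indep hξ_meas hξ_indep hξ_geom hξηε_indep
end
end
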